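/- Soundness of the sequential-measurement QSAT verifier: Let Π_1, …, Π_M be orthogonal projectors on a finite-dimensional complex Hilbert space and suppose Δ > 0 is such that ⟨ψ, (Σ_{m=1}^M Π_m) ψ⟩ ≥ Δ ‖ψ‖² for all ψ (i.e., the ground-state energy of Σ Π_m is at least Δ). Then for every unit vector ψ, the probability that measuring Π_1, then Π_2, …, then Π_M all yield outcome 0 satisfies ‖(Id − Π_M)(Id − Π_{M−1}) ⋯ (Id − Π_1) ψ‖² ≤ 1 − Δ/M². In particular, if Δ ≥ 1/poly in the instance size and M is polynomial, any proposed proof state is rejected with at least inverse-polynomial probability. -/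

import Mathlib

/-!
Write `φₙ` for the state after the first `n` measurements and `bₙ = ‖Πₙ φₙ‖`. By Pythagoras
`1 - ‖φ_M‖² = ∑ bₙ²`, while `‖ψ - φₙ‖ ≤ b₀ + ⋯ + bₙ₋₁` because each step removes `Πₙ φₙ`.
Hence `‖Πₘ ψ‖ ≤ bₘ + ‖ψ - φₘ‖ ≤ ∑ bₙ`, and summing the energy hypothesis gives
`Δ ≤ ∑ₘ ‖Πₘ ψ‖² ≤ M (∑ bₙ)² ≤ M² ∑ bₙ² = M² (1 - ‖φ_M‖²)` by Cauchy–Schwarz.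
-/

open scoped BigOperators

noncomputable section

/-- `seqMeas M Pr n` is the product `(Id - Π_n) ⋯ (Id - Π_2)(Id - Π_1)` of the first
`n` complemented measurement operators: the unnormalized post-measurement map after
sequentially measuring `Π_1, …, Π_n` and obtaining outcome `0` each time. -/
def seqMeas {E : Type*} [NormedAddCommGroup E] [InnerProductSpace ℂ E]
    (M : ℕ) (Pr : Fin M → (E →ₗ[ℂ] E)) : ℕ → (E →ₗ[ℂ] E)
  | 0 => LinearMap.id
  | n + 1 =>
    if h : n < M then (LinearMap.id - Pr ⟨n, h⟩) ∘ₗ seqMeas M Pr n else seqMeas M Pr n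

open Finset RCLike

section

variable {𝕜 E : Type*} [RCLike 𝕜] [NormedAddCommGroup E] [InnerProductSpace 𝕜 E]

namespace LinearMap.IsSymmetricProjection

variable {T : E →ₗ[𝕜] E}

theorem apply_apply (hT : T.IsSymmetricProjection) (x : E) : T (T x) = T x :=
  congr($hT.isIdempotentElem x)

theorem re_inner_self_apply (hT : T.IsSymmetricProjection) (x : E) :
    re (inner 𝕜 x (T x)) = ‖T x‖ ^ 2 := by
  rw [← inner_self_eq_norm_sq (𝕜 := 𝕜), hT.isSymmetric, hT.apply_apply]

theorem inner_apply_sub_apply_eq_zero (hT : T.IsSymmetricProjection) (x : E) :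
    inner 𝕜 (T x) (x - T x) = 0 := by
  rw [hT.isSymmetric, map_sub, hT.apply_apply, sub_self, inner_zero_right]

theorem norm_sq_eq_norm_sq_apply_add_norm_sq_sub_apply (hT : T.IsSymmetricProjection) (x : E) :
    ‖x‖ ^ 2 = ‖T x‖ ^ 2 + ‖x - T x‖ ^ 2 := by
  simpa only [sq, add_sub_cancel] using
    norm_add_sq_eq_norm_sq_add_norm_sq_of_inner_eq_zero _ _ (hT.inner_apply_sub_apply_eq_zero x)

theorem norm_apply_le (hT : T.IsSymmetricProjection) (x : E) : ‖T x‖ ≤ ‖x‖ := by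
  have := hT.norm_sq_eq_norm_sq_apply_add_norm_sq_sub_apply x
  nlinarith [norm_nonneg (T x), norm_nonneg x, sq_nonneg ‖x - T x‖]

end LinearMap.IsSymmetricProjection

theorem LinearMap.re_inner_sum_apply_eq_sum_norm_sq {ι : Type*} {s : Finset ι}
    {P : ι → E →ₗ[𝕜] E} (hP : ∀ i ∈ s, (P i).IsSymmetricProjection) (x : E) :
    re (inner 𝕜 x ((∑ i ∈ s, P i) x)) = ∑ i ∈ s, ‖P i x‖ ^ 2 := by
  rw [LinearMap.sum_apply, inner_sum, map_sum]
  exact sum_congr rfl fun i hi => (hP i hi).re_inner_self_apply x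

theorem LinearMap.isSymmetricProjection_extend_zero {M : ℕ} {Pr : Fin M → E →ₗ[𝕜] E}
    (hPr : ∀ m, (Pr m).IsSymmetricProjection) (j : ℕ) :
    (Function.extend Fin.val Pr 0 j).IsSymmetricProjection := by
  by_cases hj : ∃ m : Fin M, m.val = j
  · obtain ⟨m, rfl⟩ := hj
    rw [Fin.val_injective.extend_apply]
    exact hPr m
  · rw [Function.extend_apply' _ _ _ hj]
    exact ⟨IsIdempotentElem.zero, LinearMap.IsSymmetric.zero⟩

def zeroOutcomeState (P : ℕ → E →ₗ[𝕜] E) (ψ : E) : ℕ → E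
  | 0 => ψ
  | n + 1 => zeroOutcomeState P ψ n - P n (zeroOutcomeState P ψ n)

namespace zeroOutcomeState

variable (P : ℕ → E →ₗ[𝕜] E) (ψ : E)

local notation "φ" => zeroOutcomeState P ψ

theorem norm_sq (hP : ∀ j, (P j).IsSymmetricProjection) (n : ℕ) :
    ‖φ n‖ ^ 2 = ‖ψ‖ ^ 2 - ∑ j ∈ range n, ‖P j (φ j)‖ ^ 2 := by
  induction n with
  | zero => simp [zeroOutcomeState]
  | succ n ih =>
    rw [sum_range_succ, zeroOutcomeState,
      ← sub_sub, ← ih, (hP n).norm_sq_eq_norm_sq_apply_add_norm_sq_sub_apply (φ n)]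
    ring

theorem norm_sub_le (n : ℕ) : ‖ψ - φ n‖ ≤ ∑ j ∈ range n, ‖P j (φ j)‖ := by
  induction n with
  | zero => simp [zeroOutcomeState]
  | succ n ih =>
    calc ‖ψ - φ (n + 1)‖ = ‖(ψ - φ n) + P n (φ n)‖ := by
          rw [zeroOutcomeState, sub_sub_eq_add_sub, add_sub_right_comm]
      _ ≤ ‖ψ - φ n‖ + ‖P n (φ n)‖ := norm_add_le _ _
      _ ≤ ∑ j ∈ range (n + 1), ‖P j (φ j)‖ := by rw [sum_range_succ]; gcongr

theorem norm_apply_le_sum {m : ℕ} (hP : (P m).IsSymmetricProjection) :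
    ‖P m ψ‖ ≤ ∑ j ∈ range (m + 1), ‖P j (φ j)‖ :=
  calc ‖P m ψ‖ = ‖P m (φ m) + P m (ψ - φ m)‖ := by rw [← map_add, add_sub_cancel]
    _ ≤ ‖P m (φ m)‖ + ‖ψ - φ m‖ := (norm_add_le _ _).trans (by gcongr; exact hP.norm_apply_le _)
    _ ≤ ‖P m (φ m)‖ + ∑ j ∈ range m, ‖P j (φ j)‖ := by gcongr; exact norm_sub_le P ψ m
    _ = ∑ j ∈ range (m + 1), ‖P j (φ j)‖ := by rw [sum_range_succ, add_comm]

theorem sum_norm_sq_apply_le (hP : ∀ j, (P j).IsSymmetricProjection) (n : ℕ) :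
    ∑ m ∈ range n, ‖P m ψ‖ ^ 2 ≤ n ^ 2 * (‖ψ‖ ^ 2 - ‖φ n‖ ^ 2) := by
  set S := ∑ j ∈ range n, ‖P j (φ j)‖
  have hS : ∀ m ∈ range n, ‖P m ψ‖ ≤ S := fun m hm =>
    (norm_apply_le_sum P ψ (hP m)).trans <| sum_le_sum_of_subset_of_nonneg
      (range_subset_range.2 (mem_range.1 hm)) fun _ _ _ => norm_nonneg _
  calc ∑ m ∈ range n, ‖P m ψ‖ ^ 2 ≤ n * S ^ 2 := by
        simpa using sum_le_card_nsmul _ _ _ fun m hm => pow_le_pow_left₀ (norm_nonneg _) (hS m hm) 2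
    _ ≤ n * (n * ∑ j ∈ range n, ‖P j (φ j)‖ ^ 2) := by
        gcongr; simpa using sq_sum_le_card_mul_sum_sq (s := range n) (f := fun j => ‖P j (φ j)‖)
    _ = n ^ 2 * (‖ψ‖ ^ 2 - ‖φ n‖ ^ 2) := by rw [norm_sq P ψ hP]; ring

end zeroOutcomeState

end

-- Past index `M` the map `seqMeas` stays constant, matching measurements of the zero projector.
theorem seqMeas_apply_eq_zeroOutcomeState {E : Type*} [NormedAddCommGroup E]
    [InnerProductSpace ℂ E] (M : ℕ) (Pr : Fin M → E →ₗ[ℂ] E) (ψ : E) (n : ℕ) :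
    seqMeas M Pr n ψ = zeroOutcomeState (Function.extend Fin.val Pr 0) ψ n := by
  induction n with
  | zero => rfl
  | succ n ih =>
    rw [seqMeas, zeroOutcomeState, ← ih]
    split_ifs with h
    · rw [show Function.extend Fin.val Pr 0 n = Pr ⟨n, h⟩ from
        Fin.val_injective.extend_apply Pr 0 ⟨n, h⟩]
      rfl
    · rw [Function.extend_apply' _ _ _ fun ⟨m, hm⟩ => h (hm ▸ m.isLt)]
      simp

theorem sequential_verifier_soundness_general {E : Type*} [NormedAddCommGroup E]
    [InnerProductSpace ℂ E]
    (M : ℕ) (Pr : Fin M → (E →ₗ[ℂ] E))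
    (h_idem : ∀ m, (Pr m) ∘ₗ (Pr m) = Pr m)
    (h_sa : ∀ m, ∀ x y : E, (inner ℂ ((Pr m) x) y : ℂ) = inner ℂ x ((Pr m) y))
    (Δ : ℝ)
    (h_energy : ∀ ψ : E, Δ * ‖ψ‖ ^ 2 ≤ (inner ℂ ψ ((∑ m, Pr m) ψ) : ℂ).re) :
    ∀ ψ : E, ‖ψ‖ = 1 →
      ‖seqMeas M Pr M ψ‖ ^ 2 ≤ 1 - Δ / (M : ℝ) ^ 2 := by
  intro ψ hψ
  set P := Function.extend Fin.val Pr 0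
  set φ := zeroOutcomeState P ψ
  have hPr : ∀ m, (Pr m).IsSymmetricProjection := fun m => ⟨h_idem m, h_sa m⟩
  have hP : ∀ j, (P j).IsSymmetricProjection := LinearMap.isSymmetricProjection_extend_zero hPr
  have h_energy_sum : Δ ≤ ∑ m ∈ range M, ‖P m ψ‖ ^ 2 := by
    have h := (h_energy ψ).trans_eq
      (LinearMap.re_inner_sum_apply_eq_sum_norm_sq (fun m _ => hPr m) ψ)
    rw [hψ, one_pow, mul_one] at h
    simpa only [← Fin.sum_univ_eq_sum_range, P, Fin.val_injective.extend_apply] using h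
  have h_bound : Δ ≤ (1 - ‖φ M‖ ^ 2) * M ^ 2 := by
    have := zeroOutcomeState.sum_norm_sq_apply_le P ψ hP M
    rw [hψ] at this
    linarith
  have h_norm_le : ‖φ M‖ ^ 2 ≤ 1 := by
    rw [zeroOutcomeState.norm_sq P ψ hP, hψ, one_pow, sub_le_self_iff]
    positivity
  rw [seqMeas_apply_eq_zeroOutcomeState]
  -- this also covers `M = 0`, where `Δ / 0 = 0`
  linarith [div_le_of_le_mul₀ (sq_nonneg (M : ℝ)) (sub_nonneg.2 h_norm_le) h_bound]

/-- **Soundness of the sequential-measurement QSAT verifier.**  If the orthogonal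
projectors `Π_1, …, Π_M` satisfy `⟨ψ, (∑ Π_m) ψ⟩ ≥ Δ ‖ψ‖²` for all `ψ`, then for
every unit vector `ψ` the probability
`‖(Id - Π_M) ⋯ (Id - Π_1) ψ‖²` that all sequential measurements yield outcome `0` is
at most `1 - Δ/M²`. -/
theorem sequential_verifier_soundness {E : Type*} [NormedAddCommGroup E]
    [InnerProductSpace ℂ E] [FiniteDimensional ℂ E]
    (M : ℕ) (Pr : Fin M → (E →ₗ[ℂ] E))
    (h_idem : ∀ m, (Pr m) ∘ₗ (Pr m) = Pr m)
    (h_sa : ∀ m, ∀ x y : E, (inner ℂ ((Pr m) x) y : ℂ) = inner ℂ x ((Pr m) y))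
    (Δ : ℝ) (hΔ : 0 < Δ)
    (h_energy : ∀ ψ : E, Δ * ‖ψ‖ ^ 2 ≤ (inner ℂ ψ ((∑ m, Pr m) ψ) : ℂ).re) :
    ∀ ψ : E, ‖ψ‖ = 1 →
      ‖seqMeas M Pr M ψ‖ ^ 2 ≤ 1 - Δ / (M : ℝ) ^ 2 :=
  sequential_verifier_soundness_general M Pr h_idem h_sa Δ h_energy
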